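/- arXiv:2602.21330 — 6 statements merged into one kernel-verified Lean document; each statement's English description precedes it below -/
import Mathlib

section
/- Let K be an extremally disconnected topological space. The map Opens K → Clopens K sending an open subset to its closure (which is clopen) is a bounded lattice homomorphism: it sends the empty set to the empty set and K to K, and for all open subsets U, V of K it satisfies closure(U ∪ V) = closure(U) ∪ closure(V) and closure(U ∩ V) = closure(U) ∩ closure(V). -/
open TopologicalSpace

/-!
Closure always preserves finite unions and `∅`, `univ`. For intersections, if `closure U` and
`V` are open then `closure U ∩ closure V ⊆ closure (closure U ∩ V) ⊆ closure (U ∩ V)`, using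
twice that an open set meets the closure of a set only inside the closure of the intersection.
-/

theorem closure_inter_eq_of_isOpen_closure {X : Type*} [TopologicalSpace X] {s t : Set X}
    (hs : IsOpen (closure s)) (ht : IsOpen t) :
    closure (s ∩ t) = closure s ∩ closure t := by
  refine closure_inter_subset.antisymm ?_
  calc closure s ∩ closure t ⊆ closure (closure s ∩ t) := hs.inter_closure
    _ = closure (t ∩ closure s) := by rw [Set.inter_comm]
    _ ⊆ closure (t ∩ s) := closure_minimal ht.inter_closure isClosed_closure
    _ = closure (s ∩ t) := by rw [Set.inter_comm]

namespace TopologicalSpace.Opens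

variable {K : Type*} [TopologicalSpace K] [ExtremallyDisconnected K]

def closureClopen (U : Opens K) : Clopens K :=
  ⟨closure U, isClosed_closure, ExtremallyDisconnected.open_closure _ U.isOpen⟩

def closureBoundedLatticeHom : BoundedLatticeHom (Opens K) (Clopens K) where
  toFun := closureClopen
  map_sup' U V := Clopens.ext <| closure_union (s := (U : Set K)) (t := V)
  map_inf' U V := Clopens.ext <|
    closure_inter_eq_of_isOpen_closure (ExtremallyDisconnected.open_closure _ U.isOpen) V.isOpen
  map_top' := Clopens.ext closure_univ
  map_bot' := Clopens.ext closure_empty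

end TopologicalSpace.Opens

/-- For an extremally disconnected space `K`, the map `Opens K → Clopens K` sending an open
set to its (clopen) closure is a bounded lattice homomorphism. -/
theorem stmt2 {K : Type*} [TopologicalSpace K] [ExtremallyDisconnected K] :
    ∃ L : BoundedLatticeHom (Opens K) (Clopens K),
      ∀ U : Opens K, ((L U : Clopens K) : Set K) = closure (U : Set K) :=
  ⟨Opens.closureBoundedLatticeHom, fun _ => rfl⟩
end

section
/- Let S be a set, μ an ultrafilter on S, X : S → Type a family of types, and F the sheaf of types on the discrete space S whose sections over a subset U ⊆ S are the product ∏_{s ∈ U} X s, with restriction maps the projections. Then the stalk at the point μ ∈ Ultrafilter S of the pushforward sheaf pure_* F is naturally isomorphic to the ultraproduct ∫_S X dμ, i.e., to the filtered colimit over S0 ∈ μ (ordered by reverse inclusion) of the products ∏_{s ∈ S0} X s. -/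
open CategoryTheory TopologicalSpace Opposite
open scoped AlgebraicGeometry

universe u

/-- The ultraproduct `∫_S X dμ` of a family of types `X : S → Type` along an ultrafilter
`μ` on `S`: the filtered colimit over `S0 ∈ μ` (ordered by reverse inclusion) of the
products `∏_{s ∈ S0} X s`, realized as the quotient of the disjoint union of these
products identifying two elements when they agree on some member of `μ`. -/
def UltraProd {S : Type u} (μ : Ultrafilter S) (X : S → Type u) : Type u :=
  Quot (fun (a b : (T : {T : Set S // T ∈ μ}) × ((s : (T.1 : Set S)) → X s)) =>
    ∃ (S2 : Set S) (_ : S2 ∈ μ) (ha : S2 ⊆ a.1.1) (hb : S2 ⊆ b.1.1),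
      ∀ (s : S) (hs : s ∈ S2), a.2 ⟨s, ha hs⟩ = b.2 ⟨s, hb hs⟩)

/-- The map `pure : S → Ultrafilter S`, as a morphism in `TopCat`. -/
def pureHom (S : Type u) [TopologicalSpace S] [DiscreteTopology S] :
    TopCat.of S ⟶ TopCat.of (Ultrafilter S) :=
  TopCat.ofHom ⟨pure, by
    show Continuous (pure : S → Ultrafilter S)
    exact continuous_of_discreteTopology⟩

/-! A section of `pure_* F` over an open `V ∋ μ` is a family on `pure ⁻¹' V`, which lies in `μ`
because `pure` tends to `μ` along `μ`; this defines a map from the stalk to the ultraproduct.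
Conversely a family on `T ∈ μ` is a section over the basic clopen `{m | T ∈ m}`, whose preimage
under `pure` is `T` itself, and two families that agree on a member of `μ` have the same germ. -/

open CategoryTheory.Limits

namespace UltraProd

variable {S : Type u} {μ : Ultrafilter S} {X : S → Type u}

abbrev mk (T : Set S) (hT : T ∈ μ) (x : (s : T) → X s) : UltraProd μ X :=
  Quot.mk _ ⟨⟨T, hT⟩, x⟩

theorem mk_restrict {T T' : Set S} (hT : T ∈ μ) (hT' : T' ∈ μ) (hTT' : T ⊆ T')
    (x : (s : T') → X s) : mk T hT (fun s => x ⟨s, hTT' s.2⟩) = mk T' hT' x :=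
  Quot.sound ⟨T, hT, subset_rfl, hTT', fun _ _ => rfl⟩

end UltraProd

noncomputable section

namespace StalkPushforwardPure

variable (S : Type u) [TopologicalSpace S] [DiscreteTopology S] (μ : Ultrafilter S)
  (X : S → Type u)

abbrev presheaf : (TopCat.of (Ultrafilter S)).Presheaf (Type u) :=
  pureHom S _* TopCat.presheafToTypes (TopCat.of S) X

theorem preimage_mem {V : Opens (TopCat.of (Ultrafilter S))} (hV : μ ∈ V) :
    (pureHom S ⁻¹' V : Set S) ∈ μ :=
  Ultrafilter.tendsto_pure_self μ (V.isOpen.mem_nhds hV)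

def germCocone : Cocone ((OpenNhds.inclusion μ).op ⋙ presheaf S X) where
  pt := UltraProd μ X
  ι :=
    { app := fun W => TypeCat.ofHom fun f =>
        UltraProd.mk _ (preimage_mem S μ W.unop.2) fun s => f ⟨s.1, s.2⟩
      naturality := fun W W' i => by
        ext f
        exact UltraProd.mk_restrict (preimage_mem S μ W'.unop.2) (preimage_mem S μ W.unop.2)
          (fun s hs => i.unop.le hs) _ }

def toUltraProd : (presheaf S X).stalk μ → UltraProd μ X :=
  colimit.desc _ (germCocone S μ X)

theorem toUltraProd_germ (U : Opens (TopCat.of (Ultrafilter S))) (hU : μ ∈ U)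
    (f : (presheaf S X).obj (op U)) :
    toUltraProd S μ X ((presheaf S X).germ U μ hU f) =
      UltraProd.mk _ (preimage_mem S μ hU) fun s => f ⟨s.1, s.2⟩ :=
  ConcreteCategory.congr_hom (colimit.ι_desc (germCocone S μ X) (op ⟨U, hU⟩)) f

def germOfMem (T : Set S) (hT : T ∈ μ) (x : (s : T) → X s) : (presheaf S X).stalk μ :=
  (presheaf S X).germ ⟨{m : Ultrafilter S | T ∈ m}, ultrafilter_isOpen_basic T⟩ μ hT
    fun t => x ⟨t.1, Ultrafilter.mem_pure.mp t.2⟩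

def ofUltraProd : UltraProd μ X → (presheaf S X).stalk μ :=
  Quot.lift (fun a => germOfMem S μ X a.1.1 a.1.2 a.2) <| by
    rintro ⟨⟨Ta, hTa⟩, xa⟩ ⟨⟨Tb, hTb⟩, xb⟩ ⟨T, hT, hTa, hTb, h⟩
    refine TopCat.Presheaf.germ_ext _ ⟨{m : Ultrafilter S | T ∈ m}, ultrafilter_isOpen_basic T⟩
      hT (homOfLE fun m hm => Filter.mem_of_superset hm hTa)
      (homOfLE fun m hm => Filter.mem_of_superset hm hTb) ?_
    funext t
    exact h t.1 (Ultrafilter.mem_pure.mp t.2)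

theorem ofUltraProd_toUltraProd (t : (presheaf S X).stalk μ) :
    ofUltraProd S μ X (toUltraProd S μ X t) = t := by
  obtain ⟨U, hU, f, rfl⟩ := (presheaf S X).exists_germ_eq t
  rw [toUltraProd_germ]
  exact TopCat.Presheaf.germ_ext (presheaf S X)
    (⟨{m : Ultrafilter S | pureHom S ⁻¹' U ∈ m}, ultrafilter_isOpen_basic _⟩ ⊓ U)
    ⟨preimage_mem S μ hU, hU⟩ (homOfLE inf_le_left) (homOfLE inf_le_right) rfl

theorem toUltraProd_germOfMem (T : Set S) (hT : T ∈ μ) (x : (s : T) → X s) :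
    toUltraProd S μ X (germOfMem S μ X T hT x) = UltraProd.mk T hT x :=
  (toUltraProd_germ S μ X _ _ _).trans
    (UltraProd.mk_restrict hT _ (fun _ => Ultrafilter.mem_pure.mpr) _)

theorem toUltraProd_ofUltraProd (q : UltraProd μ X) :
    toUltraProd S μ X (ofUltraProd S μ X q) = q := by
  induction q using Quot.ind with
  | mk a => exact toUltraProd_germOfMem S μ X a.1.1 a.1.2 a.2

def equiv : (presheaf S X).stalk μ ≃ UltraProd μ X where
  toFun := toUltraProd S μ X
  invFun := ofUltraProd S μ X
  left_inv := ofUltraProd_toUltraProd S μ X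
  right_inv := toUltraProd_ofUltraProd S μ X

end StalkPushforwardPure

end

/-- Let `S` be a discrete space, `μ` an ultrafilter on `S`, `X : S → Type` a family of
types and `F` the sheaf on `S` with `F(U) = ∏_{s ∈ U} X s`.  The stalk at
`μ ∈ Ultrafilter S` of the pushforward sheaf `pure_* F` is naturally isomorphic to the
ultraproduct `∫_S X dμ`, compatibly with germs of sections over the basic clopen
neighbourhoods `{m | S0 ∈ m}` of `μ`. -/
theorem stmt7 (S : Type u) [TopologicalSpace S] [DiscreteTopology S]
    (μ : Ultrafilter S) (X : S → Type u) :
    ∃ e : (pureHom S _* TopCat.presheafToTypes (TopCat.of S) X).stalk μ ≃ UltraProd μ X,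
      ∀ (S0 : Set S) (h : S0 ∈ μ) (x : (s : S0) → X s),
        e ((pureHom S _* TopCat.presheafToTypes (TopCat.of S) X).germ
            ⟨{m : Ultrafilter S | S0 ∈ m}, ultrafilter_isOpen_basic S0⟩ μ h
            (fun t => x ⟨t.1, Ultrafilter.mem_pure.mp t.2⟩))
          = Quot.mk _ ⟨⟨S0, h⟩, x⟩ :=
  ⟨StalkPushforwardPure.equiv S μ X, StalkPushforwardPure.toUltraProd_germOfMem S μ X⟩
end

section
/- Let S be a set. The pushforward functor pure_* along the map pure : S → Ultrafilter S, from the category of sheaves of types on the discrete space S to the category of sheaves of types on Ultrafilter S, preserves epimorphisms: if φ : F → G is an epimorphism of sheaves of types on S, then pure_* φ : pure_* F → pure_* G is an epimorphism of sheaves of types on Ultrafilter S. -/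
open CategoryTheory

universe u

/-!
On a discrete space an epimorphism of sheaves of types, being locally surjective, is surjective
on every open set `U`: a section over `U` lifts on each open singleton `{x} ⊆ U`, and lifts over
pairwise disjoint opens always glue. Pushforward merely reindexes sections,
`(pure_* F)(V) = F(pure⁻¹ V)`, so `pure_* φ` is again surjective on sections, hence an epimorphism.
-/

open Function Opposite TopologicalSpace

namespace TopologicalSpace.Opens

variable {α : Type*} [TopologicalSpace α] [DiscreteTopology α]

def discreteSingleton (x : α) : Opens α := ⟨{x}, isOpen_discrete _⟩

theorem discreteSingleton_le {x : α} {U : Opens α} (hx : x ∈ U) : discreteSingleton x ≤ U :=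
  Set.singleton_subset_iff.2 hx

theorem disjoint_discreteSingleton {x y : α} (hxy : x ≠ y) :
    Disjoint (discreteSingleton x) (discreteSingleton y) :=
  disjoint_iff.2 <| Opens.ext <| Set.singleton_inter_eq_empty.2 hxy

end TopologicalSpace.Opens

namespace TopCat

variable {X : TopCat.{u}}

theorem Sheaf.isCompatible_of_pairwise_disjoint (F : X.Sheaf (Type u)) {ι : Type*}
    {V : ι → Opens X} (hV : Pairwise (Disjoint on V)) (sf : ∀ i, F.obj.obj (op (V i))) :
    Presheaf.IsCompatible F.obj V sf := by
  intro i j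
  obtain rfl | hij := eq_or_ne i j
  · rfl
  · have : Unique (F.obj.obj (op (V i ⊓ V j))) :=
      Limits.Types.isTerminalEquivUnique _ (F.isTerminalOfEqEmpty (hV hij).eq_bot)
    exact Subsingleton.elim _ _

theorem Sheaf.epi_pushforward_map_of_app_surjective {Y : TopCat.{u}} (f : X ⟶ Y)
    {F G : X.Sheaf (Type u)} (φ : F ⟶ G) (hφ : ∀ U, Surjective (φ.hom.app U)) :
    Epi ((Sheaf.pushforward (Type u) f).map φ) :=
  (Sheaf.isLocallySurjective_iff_epi _).1 <|
    Presheaf.isLocallySurjective_of_surjective _ _ fun _ => hφ _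

section Discrete

variable [DiscreteTopology X] {F G : X.Sheaf (Type u)} {φ : F ⟶ G}

theorem Sheaf.exists_app_discreteSingleton_eq (hφ : Presheaf.IsLocallySurjective φ.hom)
    {U : Opens X} (g : G.obj.obj (op U)) {x : X} (hx : x ∈ U) :
    ∃ s, φ.hom.app (op (Opens.discreteSingleton x)) s =
      G.obj.map (homOfLE (Opens.discreteSingleton_le hx)).op g := by
  obtain ⟨W, ι, ⟨s, hs⟩, hxW⟩ := hφ.imageSieve_mem g x hx
  refine ⟨F.obj.map (homOfLE (Opens.discreteSingleton_le hxW)).op s, ?_⟩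
  rw [NatTrans.naturality_apply, hs, ← Functor.map_comp_apply]
  rfl

theorem Sheaf.app_surjective_of_isLocallySurjective (hφ : Presheaf.IsLocallySurjective φ.hom)
    (U : Opens X) : Surjective (φ.hom.app (op U)) := by
  intro g
  let V : U → Opens X := fun x => Opens.discreteSingleton x.1
  let ι : ∀ x, V x ⟶ U := fun x => homOfLE (Opens.discreteSingleton_le x.2)
  have hcover : U ≤ iSup V := fun x hx => Opens.mem_iSup.2 ⟨⟨x, hx⟩, rfl⟩
  choose sf hsf using fun x : U => exists_app_discreteSingleton_eq hφ g x.2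
  have hV : Pairwise (Disjoint on V) := fun x y hxy =>
    Opens.disjoint_discreteSingleton (Subtype.coe_injective.ne hxy)
  obtain ⟨f, hf, -⟩ :=
    F.existsUnique_gluing' V U ι hcover sf (F.isCompatible_of_pairwise_disjoint hV sf)
  refine ⟨f, G.eq_of_locally_eq' V U ι hcover _ _ fun x => ?_⟩
  rw [← NatTrans.naturality_apply, hf, hsf]

end Discrete

end TopCat

/-- Pushforward along `pure : S → Ultrafilter S`, from sheaves of types on the discrete
space `S` to sheaves of types on `Ultrafilter S`, preserves epimorphisms. -/
theorem stmt11 (S : Type u) [TopologicalSpace S] [DiscreteTopology S]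
    (F G : TopCat.Sheaf (Type u) (TopCat.of S)) (φ : F ⟶ G) (hφ : Epi φ) :
    Epi ((TopCat.Sheaf.pushforward (Type u) (pureHom S)).map φ) := by
  have hφ_loc := (TopCat.Sheaf.isLocallySurjective_iff_epi φ).2 hφ
  exact TopCat.Sheaf.epi_pushforward_map_of_app_surjective (pureHom S) φ fun V =>
    TopCat.Sheaf.app_surjective_of_isLocallySurjective hφ_loc _
end

section
/- Let S be a set. The pushforward functor pure_* along the map pure : S → Ultrafilter S, from the category of sheaves of types on the discrete space S to the category of sheaves of types on Ultrafilter S, preserves finite coproducts. -/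
/-!
On a discrete space a sheaf is determined by its values on points, so the coproduct of sheaves
`F j` is the sheaf of sections of the fibrewise disjoint union `Σ j, F j {x}`. A section of it
over `pure⁻¹ V` labels every point by some `j`, i.e. partitions `pure⁻¹ V` into opens `A j`.
For finite `J` the clopen sets `V ∩ {μ | A j ∈ μ}` partition `V` and have preimages `A j`; since
`S` is dense in `Ultrafilter S`, an open set with empty preimage is empty, so pieces carrying
different labels never meet. Hence a cocone under the pushforwards of the `F j` sends such a
section to the unique gluing of its values on the pieces.
-/

open CategoryTheory

universe u

open Limits TopologicalSpace Opposite Function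

namespace TopCat

variable {X Y : TopCat.{u}}

lemma Presheaf.map_homOfLE_map_homOfLE (F : X.Presheaf (Type u)) {U V W : Opens X} (hUV : U ≤ V)
    (hVW : V ≤ W) (s : F.obj (op W)) :
    F.map (homOfLE hUV).op (F.map (homOfLE hVW).op s) = F.map (homOfLE (hUV.trans hVW)).op s := by
  rw [← Functor.map_comp_apply]
  rfl

lemma Presheaf.map_homOfLE_self (F : X.Presheaf (Type u)) {U : Opens X} (h : U ≤ U)
    (s : F.obj (op U)) : F.map (homOfLE h).op s = s :=
  F.map_id_apply (op U) s

lemma Sheaf.subsingleton_of_eq_bot (F : X.Sheaf (Type u)) {V : Opens X} (hV : V = ⊥) :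
    Subsingleton (F.obj.obj (op V)) :=
  @Unique.instSubsingleton _ (Types.isTerminalEquivUnique _ (F.isTerminalOfEqEmpty hV))

lemma Sheaf.existsUnique_gluing_of_pairwise_disjoint (F : X.Sheaf (Type u)) {ι : Type*}
    {U : ι → Opens X} (hU : Pairwise (Disjoint on U)) {V : Opens X} (hUV : ∀ i, U i ≤ V)
    (hV : V ≤ ⨆ i, U i) (sf : ∀ i, F.obj.obj (op (U i))) :
    ∃! s : F.obj.obj (op V), ∀ i, F.obj.map (homOfLE (hUV i)).op s = sf i := by
  refine F.existsUnique_gluing' U V (fun i => homOfLE (hUV i)) hV sf fun i j => ?_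
  rcases eq_or_ne i j with rfl | hij
  · rfl
  · exact @Subsingleton.elim _ (F.subsingleton_of_eq_bot (disjoint_iff.mp (hU hij))) _ _

lemma eq_bot_of_map_eq_bot {f : X ⟶ Y} (hf : DenseRange f) {O : Opens Y}
    (hO : (Opens.map f).obj O = ⊥) : O = ⊥ := by
  refine Opens.ext (Set.not_nonempty_iff_eq_empty.mp fun hne => ?_)
  obtain ⟨x, hx⟩ := hf.exists_mem_open O.2 hne
  exact (hO ▸ hx : x ∈ (⊥ : Opens X))

def LiftsPartitions (f : X ⟶ Y) (J : Type*) : Prop :=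
  ∀ (V : Opens Y) (A : J → Opens X), Pairwise (Disjoint on A) →
    ⨆ j, A j = (Opens.map f).obj V →
      ∃ W : J → Opens Y, Pairwise (Disjoint on W) ∧ ⨆ j, W j = V ∧
        ∀ j, (Opens.map f).obj (W j) = A j

end TopCat

section Discrete

open TopCat

variable {X : TopCat.{u}} [DiscreteTopology X]

def singletonOpen (x : X) : Opens X := ⟨{x}, isOpen_discrete _⟩

lemma singletonOpen_le {U : Opens X} {x : X} (hx : x ∈ U) : singletonOpen x ≤ U :=
  Set.singleton_subset_iff.2 hx

lemma TopCat.Sheaf.existsUnique_map_singletonOpen_eq (G : X.Sheaf (Type u)) {U : Opens X}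
    (sf : ∀ x : U, G.obj.obj (op (singletonOpen (x : X)))) :
    ∃! s : G.obj.obj (op U),
      ∀ x : U, G.obj.map (homOfLE (singletonOpen_le x.2)).op s = sf x := by
  refine G.existsUnique_gluing_of_pairwise_disjoint (fun x y hxy => ?_) _
    (fun x hx => Opens.mem_iSup.2 ⟨⟨x, hx⟩, rfl⟩) sf
  exact Opens.coe_disjoint.1 (Set.disjoint_singleton.2 (Subtype.coe_injective.ne hxy))

lemma TopCat.Sheaf.ext_singletonOpen (G : X.Sheaf (Type u)) {U : Opens X} {s t : G.obj.obj (op U)}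
    (h : ∀ x : U, G.obj.map (homOfLE (singletonOpen_le x.2)).op s =
      G.obj.map (homOfLE (singletonOpen_le x.2)).op t) : s = t :=
  (G.existsUnique_map_singletonOpen_eq _).unique h fun _ => rfl

variable {J : Type} (F : J → X.Sheaf (Type u))

def SigmaFiber (x : X) : Type u := Σ j, (F j).obj.obj (op (singletonOpen x))

noncomputable def sigmaSheaf : X.Sheaf (Type u) := sheafToTypes X (SigmaFiber F)

def sigmaSheafι (j : J) : F j ⟶ sigmaSheaf F where
  hom :=
    { app U := TypeCat.ofHom fun t x =>
        ⟨j, (F j).obj.map (homOfLE (singletonOpen_le x.2)).op t⟩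
      naturality U V i := by
        ext t
        funext x
        exact congrArg (Sigma.mk j) (Functor.map_comp_apply _ _ _ _).symm }

variable {F}

lemma existsUnique_sigmaSheafι_eq {U : Opens X} (q : ∀ x : U, SigmaFiber F x) (j : J)
    (hq : ∀ x, (q x).1 = j) :
    ∃! t : (F j).obj.obj (op U), (sigmaSheafι F j).hom.app (op U) t = q := by
  have hfib : ∀ x : U, ∃ s, (⟨j, s⟩ : SigmaFiber F x) = q x := fun x => by
    have := hq x
    revert this
    generalize q x = p
    rintro rfl
    exact ⟨p.2, rfl⟩
  choose sf hsf using hfib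
  obtain ⟨t, ht, -⟩ := (F j).existsUnique_map_singletonOpen_eq sf
  refine ⟨t, funext fun x => (congrArg (Sigma.mk j) (ht x)).trans (hsf x), fun t' ht' => ?_⟩
  refine (F j).ext_singletonOpen fun x => ?_
  have hx := ((congrFun ht' x).trans (hsf x).symm).trans (congrArg (Sigma.mk j) (ht x)).symm
  exact sigma_mk_injective (β := fun j => (F j).obj.obj (op (singletonOpen (x : X)))) hx

noncomputable def toSummand {U : Opens X} (q : ∀ x : U, SigmaFiber F x) (j : J)
    (hq : ∀ x, (q x).1 = j) : (F j).obj.obj (op U) :=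
  (existsUnique_sigmaSheafι_eq q j hq).exists.choose

lemma sigmaSheafι_toSummand {U : Opens X} (q : ∀ x : U, SigmaFiber F x) (j : J)
    (hq : ∀ x, (q x).1 = j) : (sigmaSheafι F j).hom.app (op U) (toSummand q j hq) = q :=
  (existsUnique_sigmaSheafι_eq q j hq).exists.choose_spec

lemma toSummand_sigmaSheafι {U : Opens X} (j : J) (t : (F j).obj.obj (op U)) :
    toSummand ((sigmaSheafι F j).hom.app (op U) t) j (fun _ => rfl) = t :=
  (existsUnique_sigmaSheafι_eq _ j fun _ => rfl).unique (sigmaSheafι_toSummand _ j _) rfl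

lemma map_toSummand {U U' : Opens X} (h : U' ≤ U) (q : ∀ x : U, SigmaFiber F x) (j : J)
    (hq : ∀ x, (q x).1 = j) :
    (F j).obj.map (homOfLE h).op (toSummand q j hq) =
      toSummand (fun x : U' => q ⟨x, h x.2⟩) j (fun _ => hq _) := by
  refine (existsUnique_sigmaSheafι_eq (fun x : U' => q ⟨x, h x.2⟩) j fun _ => hq _).unique ?_
    (sigmaSheafι_toSummand _ j _)
  exact (NatTrans.naturality_apply (sigmaSheafι F j).hom (homOfLE h).op _).trans
    (congrArg _ (sigmaSheafι_toSummand q j hq))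

def labelOpen {U : Opens X} (q : ∀ x : U, SigmaFiber F x) (j : J) : Opens X :=
  ⟨{x | ∃ hx : x ∈ U, (q ⟨x, hx⟩).1 = j}, isOpen_discrete _⟩

lemma pairwise_disjoint_labelOpen {U : Opens X} (q : ∀ x : U, SigmaFiber F x) :
    Pairwise (Disjoint on labelOpen q) := by
  refine fun j j' hjj' => Opens.coe_disjoint.1 (Set.disjoint_left.2 ?_)
  rintro x ⟨_, hj⟩ ⟨_, hj'⟩
  exact hjj' (hj.symm.trans hj')

lemma iSup_labelOpen {U : Opens X} (q : ∀ x : U, SigmaFiber F x) : ⨆ j, labelOpen q j = U :=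
  le_antisymm (iSup_le fun _ _ h => h.fst)
    fun x hx => Opens.mem_iSup.2 ⟨(q ⟨x, hx⟩).1, hx, rfl⟩

end Discrete

section Pushforward

open TopCat

variable {X Y : TopCat.{u}} [DiscreteTopology X] {J : Type} {F : J → X.Sheaf (Type u)}
  {f : X ⟶ Y} (E : Cocone (Discrete.functor F ⋙ Sheaf.pushforward (Type u) f))

noncomputable def coconePiece {O : Opens Y} (q : ∀ x : (Opens.map f).obj O, SigmaFiber F x)
    (j : J) (hq : ∀ x, (q x).1 = j) : E.pt.obj.obj (op O) :=
  (E.ι.app ⟨j⟩).hom.app (op O) (toSummand q j hq)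

lemma map_coconePiece {O O' : Opens Y} (h : O' ≤ O)
    (q : ∀ x : (Opens.map f).obj O, SigmaFiber F x) (j : J) (hq : ∀ x, (q x).1 = j) :
    E.pt.obj.map (homOfLE h).op (coconePiece E q j hq) =
      coconePiece E (fun x : (Opens.map f).obj O' => q ⟨x, h x.2⟩) j (fun _ => hq _) :=
  (NatTrans.naturality_apply (E.ι.app ⟨j⟩).hom (homOfLE h).op _).symm.trans
    (congrArg _ (map_toSummand ((Opens.map f).map (homOfLE h)).le q j hq))

variable (hJ : LiftsPartitions f J)

noncomputable def labelPartition {V : Opens Y} (q : ∀ x : (Opens.map f).obj V, SigmaFiber F x) :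
    J → Opens Y :=
  (hJ V _ (pairwise_disjoint_labelOpen q) (iSup_labelOpen q)).choose

lemma pairwise_disjoint_labelPartition {V : Opens Y}
    (q : ∀ x : (Opens.map f).obj V, SigmaFiber F x) :
    Pairwise (Disjoint on labelPartition hJ q) :=
  (hJ V _ (pairwise_disjoint_labelOpen q) (iSup_labelOpen q)).choose_spec.1

lemma iSup_labelPartition {V : Opens Y} (q : ∀ x : (Opens.map f).obj V, SigmaFiber F x) :
    ⨆ j, labelPartition hJ q j = V :=
  (hJ V _ (pairwise_disjoint_labelOpen q) (iSup_labelOpen q)).choose_spec.2.1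

lemma map_labelPartition {V : Opens Y} (q : ∀ x : (Opens.map f).obj V, SigmaFiber F x) (j : J) :
    (Opens.map f).obj (labelPartition hJ q j) = labelOpen q j :=
  (hJ V _ (pairwise_disjoint_labelOpen q) (iSup_labelOpen q)).choose_spec.2.2 j

lemma labelPartition_le {V : Opens Y} (q : ∀ x : (Opens.map f).obj V, SigmaFiber F x) (j : J) :
    labelPartition hJ q j ≤ V :=
  (le_iSup (labelPartition hJ q) j).trans (iSup_labelPartition hJ q).le

lemma label_eq_of_mem_labelPartition {V : Opens Y}
    (q : ∀ x : (Opens.map f).obj V, SigmaFiber F x) (j : J)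
    (x : (Opens.map f).obj (labelPartition hJ q j)) :
    (q ⟨x, labelPartition_le hJ q j x.2⟩).1 = j :=
  (map_labelPartition hJ q j ▸ x.2 : (x : X) ∈ labelOpen q j).snd

lemma existsUnique_descApp {V : Opens Y} (q : ∀ x : (Opens.map f).obj V, SigmaFiber F x) :
    ∃! s : E.pt.obj.obj (op V), ∀ j, E.pt.obj.map (homOfLE (labelPartition_le hJ q j)).op s =
      coconePiece E _ j (label_eq_of_mem_labelPartition hJ q j) :=
  E.pt.existsUnique_gluing_of_pairwise_disjoint (pairwise_disjoint_labelPartition hJ q) _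
    (iSup_labelPartition hJ q).ge _

noncomputable def descApp {V : Opens Y} (q : ∀ x : (Opens.map f).obj V, SigmaFiber F x) :
    E.pt.obj.obj (op V) :=
  (existsUnique_descApp E hJ q).exists.choose

lemma map_descApp_labelPartition {V : Opens Y} (q : ∀ x : (Opens.map f).obj V, SigmaFiber F x)
    (j : J) : E.pt.obj.map (homOfLE (labelPartition_le hJ q j)).op (descApp E hJ q) =
      coconePiece E _ j (label_eq_of_mem_labelPartition hJ q j) :=
  (existsUnique_descApp E hJ q).exists.choose_spec j

lemma eq_descApp {V : Opens Y} (q : ∀ x : (Opens.map f).obj V, SigmaFiber F x)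
    (s : E.pt.obj.obj (op V))
    (hs : ∀ j, E.pt.obj.map (homOfLE (labelPartition_le hJ q j)).op s =
      coconePiece E _ j (label_eq_of_mem_labelPartition hJ q j)) :
    s = descApp E hJ q :=
  (existsUnique_descApp E hJ q).unique hs (existsUnique_descApp E hJ q).exists.choose_spec

variable {E hJ} in
lemma map_descApp_of_label_eq {V O : Opens Y} (hf : DenseRange f) (h : O ≤ V)
    (q : ∀ x : (Opens.map f).obj V, SigmaFiber F x) (j : J)
    (hq : ∀ x : (Opens.map f).obj O, (q ⟨x, h x.2⟩).1 = j) :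
    E.pt.obj.map (homOfLE h).op (descApp E hJ q) = coconePiece E _ j hq := by
  refine E.pt.eq_of_locally_eq' (fun i => O ⊓ labelPartition hJ q i) O
    (fun _ => homOfLE inf_le_left) (fun y hy => ?_) _ _ fun i => ?_
  · rw [← inf_iSup_eq, iSup_labelPartition]
    exact ⟨hy, h hy⟩
  rcases eq_or_ne i j with rfl | hij
  · rw [Presheaf.map_homOfLE_map_homOfLE, map_coconePiece,
      ← Presheaf.map_homOfLE_map_homOfLE E.pt.obj inf_le_right (labelPartition_le hJ q i),
      map_descApp_labelPartition, map_coconePiece]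
  · have hbot : O ⊓ labelPartition hJ q i = ⊥ := by
      refine eq_bot_of_map_eq_bot hf (eq_bot_iff.2 fun x hx => hij ?_)
      exact (label_eq_of_mem_labelPartition hJ q i ⟨x, hx.2⟩).symm.trans (hq ⟨x, hx.1⟩)
    exact @Subsingleton.elim _ (E.pt.subsingleton_of_eq_bot hbot) _ _

variable {E hJ} in
lemma map_descApp_restrict (hf : DenseRange f) {V V' : Opens Y} (h : V' ≤ V)
    (q : ∀ x : (Opens.map f).obj V, SigmaFiber F x) :
    E.pt.obj.map (homOfLE h).op (descApp E hJ q) =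
      descApp E hJ (fun x : (Opens.map f).obj V' => q ⟨x, h x.2⟩) :=
  eq_descApp E hJ _ _ fun j =>
    (Presheaf.map_homOfLE_map_homOfLE _ _ _ _).trans
      (map_descApp_of_label_eq hf ((labelPartition_le hJ _ j).trans h) q j
        (label_eq_of_mem_labelPartition hJ (fun x : (Opens.map f).obj V' => q ⟨x, h x.2⟩) j))

noncomputable def pushforwardDesc (hf : DenseRange f) :
    (Sheaf.pushforward (Type u) f).obj (sigmaSheaf F) ⟶ E.pt where
  hom :=
    { app V := TypeCat.ofHom (descApp E hJ)
      naturality V V' i := by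
        ext q
        exact (map_descApp_restrict hf i.unop.le q).symm }

end Pushforward

open TopCat in
noncomputable def isColimitPushforwardSigmaCofan {X Y : TopCat.{u}} [DiscreteTopology X]
    {J : Type} (F : J → X.Sheaf (Type u)) {f : X ⟶ Y} (hf : DenseRange f)
    (hJ : LiftsPartitions f J) :
    IsColimit ((Sheaf.pushforward (Type u) f).mapCocone
      (Cofan.mk (sigmaSheaf F) (sigmaSheafι F))) where
  desc E := pushforwardDesc E hJ hf
  fac E := by
    rintro ⟨j⟩
    refine Sheaf.hom_ext ?_
    ext V t
    change descApp E hJ ((sigmaSheafι F j).hom.app _ t) = _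
    refine (Presheaf.map_homOfLE_self E.pt.obj le_rfl _).symm.trans ?_
    refine (map_descApp_of_label_eq hf le_rfl _ j fun _ => rfl).trans ?_
    exact congrArg _ (toSummand_sigmaSheafι j t)
  uniq E m hm := by
    refine Sheaf.hom_ext ?_
    ext V q
    refine eq_descApp E hJ q _ fun j => ?_
    refine (NatTrans.naturality_apply m.hom _ q).symm.trans ?_
    refine (congrArg (m.hom.app _)
      (sigmaSheafι_toSummand _ j (label_eq_of_mem_labelPartition hJ q j)).symm).trans ?_
    exact congrArg (fun φ : (Sheaf.pushforward (Type u) f).obj (F j) ⟶ E.pt =>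
      φ.hom.app _ (toSummand _ j (label_eq_of_mem_labelPartition hJ q j))) (hm ⟨j⟩)

/-- Pushforward along `𝟙 X` is definitionally the identity functor. -/
noncomputable def isColimitSigmaCofan {X : TopCat.{u}} [DiscreteTopology X] {J : Type}
    (F : J → X.Sheaf (Type u)) : IsColimit (Cofan.mk (sigmaSheaf F) (sigmaSheafι F)) :=
  isColimitPushforwardSigmaCofan F (f := 𝟙 X) denseRange_id
    fun _ A hA hAV => ⟨A, hA, hAV, fun _ => rfl⟩

section Ultrafilter

variable {S : Type u} [TopologicalSpace S] [DiscreteTopology S]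

lemma denseRange_pureHom : DenseRange (pureHom S) := denseRange_pure

lemma liftsPartitions_pureHom (J : Type*) [Finite J] : TopCat.LiftsPartitions (pureHom S) J := by
  intro V A hA hAV
  let W j : Opens (TopCat.of (Ultrafilter S)) :=
    ⟨{μ | (A j : Set S) ∈ μ}, ultrafilter_isOpen_basic _⟩
  refine ⟨fun j => V ⊓ W j, fun i j hij => ?_, ?_, fun j => ?_⟩
  · refine Opens.coe_disjoint.1 (Set.disjoint_left.2 ?_)
    rintro μ ⟨-, hi⟩ ⟨-, hj⟩
    have hempty : (A i : Set S) ∩ A j = ∅ := (Opens.coe_disjoint.2 (hA hij)).inter_eq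
    exact Ultrafilter.empty_notMem (hempty ▸ Filter.inter_mem hi hj)
  · refine le_antisymm (iSup_le fun _ => inf_le_left) fun μ hμ => ?_
    have hV : ∀ᶠ s in (μ : Filter S), pure s ∈ V :=
      Ultrafilter.tendsto_pure_self μ (V.2.mem_nhds hμ)
    obtain ⟨j, hj⟩ := Ultrafilter.eventually_exists_iff.1 (hV.mono fun s hs =>
      Opens.mem_iSup.1 ((hAV.ge hs : s ∈ ⨆ j, A j)))
    exact Opens.mem_iSup.2 ⟨j, hμ, hj⟩
  · refine Opens.ext (Set.ext fun s => ⟨fun hs => Ultrafilter.mem_pure.1 hs.2, fun hs => ?_⟩)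
    exact ⟨hAV.le (Opens.mem_iSup.2 ⟨j, hs⟩), Ultrafilter.mem_pure.2 hs⟩

end Ultrafilter

/-- Pushforward along `pure : S → Ultrafilter S`, from sheaves of types on the discrete
space `S` to sheaves of types on `Ultrafilter S`, preserves finite coproducts. -/
theorem stmt12 (S : Type u) [TopologicalSpace S] [DiscreteTopology S] :
    Limits.PreservesFiniteCoproducts (TopCat.Sheaf.pushforward (Type u) (pureHom S)) := by
  refine ⟨fun n => ⟨fun {K} => ?_⟩⟩
  let F j := K.obj ⟨j⟩
  have := preservesColimit_of_preserves_colimit_cocone (isColimitSigmaCofan F)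
    (isColimitPushforwardSigmaCofan F denseRange_pureHom (liftsPartitions_pureHom _))
  exact preservesColimit_of_iso_diagram _
    (Discrete.natIso fun _ => Iso.refl _ : Discrete.functor F ≅ K)
end

section
/- Let X be a sober topological space (X is T0 and every irreducible closed subset of X has a generic point) and let K be any topological space. Then the map sending a continuous map f : K → X to the frame homomorphism Opens X → Opens K given by U ↦ f⁻¹(U) is a bijection onto the set of all frame homomorphisms Opens X → Opens K. Moreover, it is an order isomorphism, where continuous maps K → X are ordered by pointwise specialization (f ≤ g if and only if for every k ∈ K, f(k) lies in the closure of {g(k)}) and frame homomorphisms are ordered pointwise. -/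
/-!
A point `k` of `K` turns a frame homomorphism `φ : Opens X → Opens K` into a point
`U ↦ k ∈ φ U` of the locale `Opens X`. For any such point `p`, the complement `Z` of the
largest open `W` with `¬p W` meets an open `U` exactly when `p U`, so `Z` is irreducible because
`p` preserves binary meets; by sobriety `Z` has a generic point `x`, and `x ∈ U ↔ p U`.
Sending `k` to this point gives the continuous map that pulls `φ` back.
-/

open TopologicalSpace Locale

namespace Locale.PT

theorem apply_iff_not_le_sSup {L : Type*} [CompleteLattice L] (p : PT L) (u : L) :
    p u ↔ ¬u ≤ sSup {v | ¬p v} := by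
  refine ⟨fun hu hle => ?_, fun h => by_contra fun hu => h (le_sSup hu)⟩
  have : p (sSup {v | ¬p v}) := OrderHomClass.mono p hle hu
  rw [map_sSup, sSup_Prop_eq] at this
  obtain ⟨_, ⟨v, hv, rfl⟩, hpv⟩ := this
  exact hv hpv

variable {X : Type*} [TopologicalSpace X]

theorem compl_sSup_inter_nonempty_iff (p : PT (Opens X)) (U : Opens X) :
    ((sSup {V | ¬p V} : Opens X)ᶜ ∩ U : Set X).Nonempty ↔ p U := by
  rw [Set.inter_comm, Set.inter_compl_nonempty_iff, p.apply_iff_not_le_sSup]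
  rfl

theorem isIrreducible_compl_sSup (p : PT (Opens X)) :
    IsIrreducible ((sSup {V | ¬p V} : Opens X)ᶜ : Set X) := by
  refine ⟨by simpa using p.compl_sSup_inter_nonempty_iff ⊤, fun u v hu hv hpu hpv => ?_⟩
  refine (p.compl_sSup_inter_nonempty_iff (⟨u, hu⟩ ⊓ ⟨v, hv⟩)).2 ?_
  rw [map_inf]
  exact ⟨(p.compl_sSup_inter_nonempty_iff ⟨u, hu⟩).1 hpu,
    (p.compl_sSup_inter_nonempty_iff ⟨v, hv⟩).1 hpv⟩

end Locale.PT

section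

variable {X K : Type*} [TopologicalSpace X] [TopologicalSpace K]

theorem Locale.localePointOfSpacePoint_surjective [QuasiSober X] :
    Function.Surjective (localePointOfSpacePoint X) := by
  intro p
  have hgen := p.isIrreducible_compl_sSup.isGenericPoint_genericPoint
    (sSup {V | ¬p V} : Opens X).isOpen.isClosed_compl
  exact ⟨_, FrameHom.ext fun U => propext <|
    (hgen.mem_open_set_iff U.isOpen).trans (p.compl_sSup_inter_nonempty_iff U)⟩

namespace TopologicalSpace.Opens

theorem exists_comap_eq_of_quasiSober [QuasiSober X] (φ : FrameHom (Opens X) (Opens K)) :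
    ∃ f : C(K, X), comap f = φ := by
  choose f hf using fun k =>
    localePointOfSpacePoint_surjective ((localePointOfSpacePoint K k).comp φ)
  have hpre (U : Opens X) : f ⁻¹' U = φ U :=
    Set.ext fun k => (DFunLike.congr_fun (hf k) U).to_iff
  refine ⟨⟨f, continuous_def.2 fun s hs => hpre ⟨s, hs⟩ ▸ (φ ⟨s, hs⟩).isOpen⟩, ?_⟩
  exact FrameHom.ext fun U => Opens.ext (hpre U)

theorem forall_specializes_iff_forall_comap_le (f g : C(K, X)) :
    (∀ k, g k ⤳ f k) ↔ ∀ U : Opens X, comap f U ≤ comap g U :=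
  ⟨fun h U k hfk => (h k).mem_open U.isOpen hfk,
    fun h _ => specializes_iff_forall_open.2 fun s hs hfk => h ⟨s, hs⟩ hfk⟩

end TopologicalSpace.Opens

end

/-- For a sober space `X` and any space `K`, the map `f ↦ (U ↦ f⁻¹(U))` is a bijection
from continuous maps `K → X` onto frame homomorphisms `Opens X → Opens K`, and it is an
order isomorphism for the pointwise specialization order on continuous maps and the
pointwise order on frame homomorphisms. -/
theorem stmt16 {X K : Type*} [TopologicalSpace X] [TopologicalSpace K]
    [T0Space X] [QuasiSober X] :
    Function.Bijective (fun f : C(K, X) => Opens.comap f) ∧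
    ∀ f g : C(K, X),
      ((∀ k : K, f k ∈ closure {g k}) ↔ ∀ U : Opens X, Opens.comap f U ≤ Opens.comap g U) := by
  refine ⟨⟨Opens.comap_injective, Opens.exists_comap_eq_of_quasiSober⟩, fun f g => ?_⟩
  simp only [← specializes_iff_mem_closure]
  exact Opens.forall_specializes_iff_forall_comap_le f g
end

section
/- Let K be an extremally disconnected compact Hausdorff topological space and let X be a spectral topological space (quasicompact, sober, quasiseparated, with a basis of quasicompact open subsets). Order the set C(K, X) of continuous maps K → X by pointwise specialization: f ≤ g if and only if for every k ∈ K, f(k) lies in the closure of {g(k)}. Then the inclusion of the subposet Map^qc(K, X) of quasicompact continuous maps (those for which the preimage of every quasicompact open subset of X is clopen, equivalently compact open, in K) into C(K, X) admits a left adjoint: there is a monotone map L : C(K, X) → Map^qc(K, X) such that for every continuous f : K → X and every quasicompact continuous g : K → X, L(f) ≤ g if and only if f ≤ g. -/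
/-!
For a continuous `f : K → X` and `k : K`, the points `x` all of whose quasicompact open
neighbourhoods `U` satisfy `k ∈ closure (f ⁻¹' U)` form a closed set; compactness of the `U`
makes it meet `U` exactly when `k ∈ closure (f ⁻¹' U)`, and it is irreducible because in an
extremally disconnected space `closure A ∩ closure B ⊆ closure (A ∩ B)` for open `A, B`.
Its generic point defines `L f k`, so that `(L f) ⁻¹' U = closure (f ⁻¹' U)` for every
quasicompact open `U`. These sets are clopen, and `closure (f ⁻¹' U) ⊆ g ⁻¹' U` iff
`f ⁻¹' U ⊆ g ⁻¹' U` when `g ⁻¹' U` is closed, which is the adjunction.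
-/

open TopologicalSpace

/-- The pointwise specialization order on maps into a topological space:
`f ≤ g` iff for every `k`, `f k` lies in the closure of `{g k}`. -/
def specLE {K X : Type*} [TopologicalSpace X] (f g : K → X) : Prop :=
  ∀ k : K, f k ∈ closure {g k}

/-- A map is quasicompact if the preimage of every quasicompact open subset is clopen. -/
def IsQCMap {K X : Type*} [TopologicalSpace K] [TopologicalSpace X] (f : K → X) : Prop :=
  ∀ U : Set X, IsOpen U → IsCompact U → IsClopen (f ⁻¹' U)

lemma ExtremallyDisconnected.closure_inter_closure_subset {K : Type*} [TopologicalSpace K]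
    [ExtremallyDisconnected K] {A B : Set K} (hA : IsOpen A) (hB : IsOpen B) :
    closure A ∩ closure B ⊆ closure (A ∩ B) :=
  calc closure A ∩ closure B ⊆ closure (closure A ∩ B) :=
        (ExtremallyDisconnected.open_closure A hA).inter_closure
    _ ⊆ closure (closure (A ∩ B)) := closure_mono hB.closure_inter
    _ = closure (A ∩ B) := closure_closure

lemma specLE_iff_preimage_subset {K X : Type*} [TopologicalSpace X]
    (hbasis : IsTopologicalBasis {U : Set X | IsCompact U ∧ IsOpen U}) {f g : K → X} :
    specLE f g ↔ ∀ U : Set X, IsCompact U → IsOpen U → f ⁻¹' U ⊆ g ⁻¹' U := by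
  refine ⟨fun h U _ hU k hk => (specializes_iff_mem_closure.2 (h k)).mem_open hU hk,
    fun h k => ?_⟩
  rw [hbasis.mem_closure_iff]
  rintro U ⟨hUc, hUo⟩ hk
  exact ⟨g k, h U hUc hUo hk, rfl⟩

section QCReflection

variable {K X : Type*} [TopologicalSpace K] [TopologicalSpace X]

def qcSupport (f : K → X) (k : K) : Set X :=
  {x | ∀ U : Set X, IsCompact U → IsOpen U → x ∈ U → k ∈ closure (f ⁻¹' U)}

lemma isClosed_qcSupport (f : K → X) (k : K) : IsClosed (qcSupport f k) := by
  rw [← isOpen_compl_iff, isOpen_iff_forall_mem_open]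
  intro x hx
  simp only [qcSupport, Set.mem_compl_iff, Set.mem_ofPred_eq, not_forall] at hx
  obtain ⟨U, hUc, hUo, hxU, hkU⟩ := hx
  exact ⟨U, fun y hyU hy => hkU (hy U hUc hUo hyU), hUo, hxU⟩

lemma inter_qcSupport_nonempty_iff (f : K → X) (k : K) {U : Set X} (hUc : IsCompact U)
    (hUo : IsOpen U) : (U ∩ qcSupport f k).Nonempty ↔ k ∈ closure (f ⁻¹' U) := by
  refine ⟨fun ⟨x, hxU, hx⟩ => hx U hUc hUo hxU, fun hk => ?_⟩
  by_contra hempty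
  have hbad : ∀ x ∈ U, ∃ V : Set X, IsCompact V ∧ IsOpen V ∧ x ∈ V ∧ k ∉ closure (f ⁻¹' V) := by
    intro x hxU
    by_contra! hgood
    exact hempty ⟨x, hxU, hgood⟩
  choose! V hVc hVo hxV hkV using hbad
  obtain ⟨t, htU, hUt⟩ :=
    hUc.elim_nhds_subcover V fun x hx => (hVo x hx).mem_nhds (hxV x hx)
  have hk' : k ∈ closure (⋃ x ∈ t, f ⁻¹' V x) := by
    simpa only [Set.preimage_iUnion₂] using closure_mono (Set.preimage_mono hUt) hk
  rw [Finset.closure_biUnion, Set.mem_iUnion₂] at hk'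
  obtain ⟨x, hxt, hkx⟩ := hk'
  exact hkV x (htU x hxt) hkx

lemma isIrreducible_qcSupport [ExtremallyDisconnected K] [CompactSpace X]
    [QuasiSeparatedSpace X] (hbasis : IsTopologicalBasis {U : Set X | IsCompact U ∧ IsOpen U})
    {f : K → X} (hf : Continuous f) (k : K) : IsIrreducible (qcSupport f k) := by
  refine ⟨?_, fun u v hu hv ⟨x₁, hx₁, hx₁u⟩ ⟨x₂, hx₂, hx₂v⟩ => ?_⟩
  · simpa using (inter_qcSupport_nonempty_iff f k isCompact_univ isOpen_univ).2 (by simp)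
  obtain ⟨U₁, ⟨hU₁c, hU₁o⟩, hx₁U₁, hU₁u⟩ := hbasis.exists_subset_of_mem_open hx₁u hu
  obtain ⟨U₂, ⟨hU₂c, hU₂o⟩, hx₂U₂, hU₂v⟩ := hbasis.exists_subset_of_mem_open hx₂v hv
  have hk : k ∈ closure (f ⁻¹' (U₁ ∩ U₂)) :=
    ExtremallyDisconnected.closure_inter_closure_subset (hU₁o.preimage hf) (hU₂o.preimage hf)
      ⟨hx₁ U₁ hU₁c hU₁o hx₁U₁, hx₂ U₂ hU₂c hU₂o hx₂U₂⟩
  obtain ⟨x, ⟨hxU₁, hxU₂⟩, hx⟩ := (inter_qcSupport_nonempty_iff f k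
    (QuasiSeparatedSpace.inter_isCompact U₁ U₂ hU₁o hU₁c hU₂o hU₂c) (hU₁o.inter hU₂o)).2 hk
  exact ⟨x, hx, hU₁u hxU₁, hU₂v hxU₂⟩

variable [ExtremallyDisconnected K] [CompactSpace X] [QuasiSober X] [QuasiSeparatedSpace X]
  (hbasis : IsTopologicalBasis {U : Set X | IsCompact U ∧ IsOpen U})
include hbasis

noncomputable def qcReflectionFun (f : C(K, X)) (k : K) : X :=
  (isIrreducible_qcSupport hbasis f.continuous k).genericPoint

lemma preimage_qcReflectionFun (f : C(K, X)) {U : Set X} (hUc : IsCompact U)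
    (hUo : IsOpen U) : qcReflectionFun hbasis f ⁻¹' U = closure (f ⁻¹' U) := by
  ext k
  have hgen := (isIrreducible_qcSupport hbasis f.continuous k).isGenericPoint_genericPoint_closure
  rw [(isClosed_qcSupport f k).closure_eq] at hgen
  rw [Set.mem_preimage, qcReflectionFun, hgen.mem_open_set_iff hUo, Set.inter_comm,
    inter_qcSupport_nonempty_iff f k hUc hUo]

noncomputable def qcReflection (f : C(K, X)) : C(K, X) where
  toFun := qcReflectionFun hbasis f
  continuous_toFun := by
    rw [hbasis.continuous_iff]
    rintro U ⟨hUc, hUo⟩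
    rw [preimage_qcReflectionFun hbasis f hUc hUo]
    exact ExtremallyDisconnected.open_closure _ (hUo.preimage f.continuous)

lemma isQCMap_qcReflection (f : C(K, X)) : IsQCMap (qcReflection hbasis f) := by
  intro U hUo hUc
  change IsClopen (qcReflectionFun hbasis f ⁻¹' U)
  rw [preimage_qcReflectionFun hbasis f hUc hUo]
  exact ⟨isClosed_closure, ExtremallyDisconnected.open_closure _ (hUo.preimage f.continuous)⟩

lemma specLE_qcReflection_iff (f g : C(K, X)) :
    specLE (qcReflection hbasis f) g ↔
      ∀ U : Set X, IsCompact U → IsOpen U → closure (f ⁻¹' U) ⊆ g ⁻¹' U := by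
  rw [specLE_iff_preimage_subset hbasis]
  refine forall₃_congr fun U hUc hUo => ?_
  rw [← preimage_qcReflectionFun hbasis f hUc hUo]
  rfl

lemma qcReflection_mono {f g : C(K, X)} (hfg : specLE f g) :
    specLE (qcReflection hbasis f) (qcReflection hbasis g) := by
  rw [specLE_qcReflection_iff]
  intro U hUc hUo
  change _ ⊆ qcReflectionFun hbasis g ⁻¹' U
  rw [preimage_qcReflectionFun hbasis g hUc hUo]
  exact closure_mono ((specLE_iff_preimage_subset hbasis).1 hfg U hUc hUo)

lemma specLE_qcReflection_iff_specLE (f : C(K, X)) {g : C(K, X)} (hg : IsQCMap g) :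
    specLE (qcReflection hbasis f) g ↔ specLE f g := by
  rw [specLE_qcReflection_iff, specLE_iff_preimage_subset hbasis]
  exact forall₃_congr fun U hUc hUo => (hg U hUo hUc).isClosed.closure_subset_iff

end QCReflection

theorem stmt19_general {K X : Type*} [TopologicalSpace K] [ExtremallyDisconnected K]
    [TopologicalSpace X] [CompactSpace X] [QuasiSober X] [QuasiSeparatedSpace X]
    (hbasis : IsTopologicalBasis {U : Set X | IsCompact U ∧ IsOpen U}) :
    ∃ L : C(K, X) → C(K, X),
      (∀ f : C(K, X), IsQCMap (L f)) ∧
      (∀ f g : C(K, X), specLE f g → specLE (L f) (L g)) ∧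
      (∀ f g : C(K, X), IsQCMap g → (specLE (L f) g ↔ specLE f g)) :=
  ⟨qcReflection hbasis, isQCMap_qcReflection hbasis, fun _ _ => qcReflection_mono hbasis,
    fun f _ hg => specLE_qcReflection_iff_specLE hbasis f hg⟩

/-- Let `K` be an extremally disconnected compact Hausdorff space and `X` a spectral space
(quasicompact, sober, quasiseparated, with a basis of quasicompact opens).  The inclusion
of quasicompact continuous maps `K → X` into all continuous maps, for the pointwise
specialization order, admits a left adjoint. -/
theorem stmt19 {K X : Type*} [TopologicalSpace K] [ExtremallyDisconnected K]
    [CompactSpace K] [T2Space K]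
    [TopologicalSpace X] [CompactSpace X] [T0Space X] [QuasiSober X] [QuasiSeparatedSpace X]
    (hbasis : IsTopologicalBasis {U : Set X | IsCompact U ∧ IsOpen U}) :
    ∃ L : C(K, X) → C(K, X),
      (∀ f : C(K, X), IsQCMap (L f)) ∧
      (∀ f g : C(K, X), specLE f g → specLE (L f) (L g)) ∧
      (∀ f g : C(K, X), IsQCMap g → (specLE (L f) g ↔ specLE f g)) :=
  stmt19_general hbasis
end
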